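/- For the implicit Euler scheme γ (Cⁿ⁺¹ − Cⁿ)/τ + A Cⁿ⁺¹ = 0 with γ symmetric positive definite and A symmetric positive semidefinite, the discrete energy is nonincreasing: (Cⁿ⁺¹)ᵀ γ Cⁿ⁺¹ ≤ (Cⁿ)ᵀ γ Cⁿ for every time step τ > 0. -/

import Mathlib

open Matrix

lemma symm_swap {N : ℕ} (γ : Matrix (Fin N) (Fin N) ℝ) (hγ : γ.IsSymm)
    (x y : Fin N → ℝ) : x ⬝ᵥ γ.mulVec y = y ⬝ᵥ γ.mulVec x := by
  rw [Matrix.dotProduct_mulVec, ← Matrix.mulVec_transpose, hγ, dotProduct_comm]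

/-- Discrete energy decay for the implicit Euler scheme
`γ (Cⁿ⁺¹ − Cⁿ)/τ + A Cⁿ⁺¹ = 0`:
`(Cⁿ⁺¹)ᵀ γ Cⁿ⁺¹ ≤ (Cⁿ)ᵀ γ Cⁿ`. -/
theorem stmt_19 {N : ℕ} (γ A : Matrix (Fin N) (Fin N) ℝ)
    (hγ : γ.PosDef) (hA : A.PosSemidef)
    (τ : ℝ) (hτ : 0 < τ) (Cn Cn1 : Fin N → ℝ)
    (hscheme : γ.mulVec (τ⁻¹ • (Cn1 - Cn)) + A.mulVec Cn1 = 0) :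
    dotProduct Cn1 (γ.mulVec Cn1) ≤ dotProduct Cn (γ.mulVec Cn) := by
  set d := Cn1 - Cn with hd
  have hγsymm : γ.IsSymm := by
    have := hγ.isHermitian
    rwa [Matrix.IsHermitian, Matrix.conjTranspose_eq_transpose_of_trivial] at this
  have hγd : γ.mulVec d = -(τ • A.mulVec Cn1) := by
    have h : τ⁻¹ • γ.mulVec d = -(A.mulVec Cn1) := by
      rw [← Matrix.mulVec_smul]
      linear_combination (norm := module) hscheme
    have := congrArg (fun v => τ • v) h
    simpa [smul_smul, mul_inv_cancel₀ hτ.ne'] using this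
  have key : Cn1 ⬝ᵥ γ.mulVec d = -(τ * (Cn1 ⬝ᵥ A.mulVec Cn1)) := by
    rw [hγd]
    simp [dotProduct_smul, smul_eq_mul]
  have h1 : Cn1 ⬝ᵥ γ.mulVec d ≤ 0 := by
    rw [key]
    have := hA.dotProduct_mulVec_nonneg Cn1
    simp only [RCLike.re_to_real, star_trivial] at this
    nlinarith
  have h2 : 0 ≤ d ⬝ᵥ γ.mulVec d := by
    have := hγ.posSemidef.dotProduct_mulVec_nonneg d
    simpa using this
  have hCn : Cn = Cn1 - d := by simp [hd]
  have expand : Cn ⬝ᵥ γ.mulVec Cn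
      = Cn1 ⬝ᵥ γ.mulVec Cn1 - 2 * (Cn1 ⬝ᵥ γ.mulVec d) + d ⬝ᵥ γ.mulVec d := by
    rw [hCn]
    have hs : d ⬝ᵥ γ.mulVec Cn1 = Cn1 ⬝ᵥ γ.mulVec d := symm_swap γ hγsymm d Cn1
    simp only [Matrix.mulVec_sub, sub_dotProduct, dotProduct_sub]
    rw [hs]; ring
  linarith
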